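/- arXiv:1603.00217 — 3 statements merged into one kernel-verified Lean document; each statement's English description precedes it below -/
import Mathlib

section
/- Let d ≥ 1 and let C̲, C̄, σ̲, σ̄ > 0. Define δ_σ(ε) = ε^{−d/2} exp(−1/(2σ²ε)) for ε > 0 and ε₀ = min( inf{ε > 0 : δ_σ̄(ε) = 1/2}, 1, (σ̄² d)^{−1} ). Then there exists a constant C > 0, depending only on d, C̲, C̄, σ̲, σ̄, with the following property. Let t₀ ∈ ℝ, x₀ ∈ ℝ^d, R ∈ (0, 1/4], ε ∈ (0, ε₀/2], and let p : (t₀ − εR², ∞) × ℝ^d → ℝ be any function satisfying the two-sided Gaussian bound C̲ s^{−d/2} e^{−|x−x₀|²/(2σ̲² s)} ≤ p(t,x) ≤ C̄ s^{−d/2} e^{−|x−x₀|²/(2σ̄² s)} with s = t − (t₀ − εR²), for all t > t₀ − εR² and x ∈ ℝ^d. Then for all (t,x) with t₀ ≤ t ≤ t₀ + 4R² and |x − x₀| ≤ 4R: (i) p(t,x) ≤ C R^{−d} whenever it is not the case that both t ≤ t₀ + R²/4 and |x − x₀| ≤ R/2; (ii) p(t,x) ≥ C^{−1} R^{−d} δ_{σ̲/4}(ε₀/2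 + ε) whenever t ≥ t₀ + ε₀R²/2; (iii) p(t,x) ≤ C R^{−d} δ_{σ̄}(ε₀/2 + ε) whenever t < t₀ + ε₀R²/2 and |x − x₀| > R. -/
/-!
Under the parabolic rescaling `t - (t₀ - εR²) = η R²`, `‖x - x₀‖ = ρ R`, both Gaussian bounds
become `R^(-d)` times the profile `η^(-d/2) exp(-ρ²/(2σ²η))`, and `δ_σ(η)` is this profile at
`ρ = 1`; the cylinder becomes `η ≤ 5`, `ρ ≤ 4`. Of `ε₀` only `0 < ε₀ ≤ 1` and `ε₀ ≤ (σ̄²d)⁻¹` matter.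
(i) Off the small cylinder either `η ≥ 1/4`, so `η^(-d/2)` is bounded, or `ρ ≥ 1/2`, and then
`exp(-c/η) ≤ d! (η/c)^d` absorbs the singularity of `η^(-d/2)` at `η = 0`.
(ii) The profile decreases in `ρ`, and its value at `ρ = 4` for `σ̲` is its value at `ρ = 1` for
`σ̲/4`; lowering the time from `η` to `ε₀/2 + ε ≥ ε₀/2` costs at most a factor `(ε₀/10)^(d/2)`.
(iii) In time, the profile at `ρ = 1` increases up to `η = 1/(σ̄²d)`, beyond `ε₀/2 + ε`.
-/

open scoped Classical
open Real
open scoped Nat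

lemma exp_neg_div_le_factorial_mul_pow (d : ℕ) {c u : ℝ} (hc : 0 < c) (hu : 0 < u) :
    exp (-(c / u)) ≤ d ! * (u / c) ^ d := by
  have hpos : 0 < (c / u) ^ d / d ! := by positivity
  calc exp (-(c / u)) = (exp (c / u))⁻¹ := exp_neg _
    _ ≤ ((c / u) ^ d / d !)⁻¹ := inv_anti₀ hpos (pow_div_factorial_le_exp (c / u) (by positivity) d)
    _ = d ! * (u / c) ^ d := by rw [inv_div, div_pow, div_pow]; field_simp

/-- `s ↦ s ^ (-d/2) * exp (-a/s)` increases up to its maximum at `s = 2a/d`. -/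
lemma rpow_neg_half_mul_exp_neg_div_le (d : ℕ) {a s s' : ℝ} (hs : 0 < s) (hss' : s ≤ s')
    (h : d / 2 * s' ≤ a) :
    s ^ (-(d:ℝ)/2) * exp (-(a/s)) ≤ s' ^ (-(d:ℝ)/2) * exp (-(a/s')) := by
  have hs' : 0 < s' := hs.trans_le hss'
  rw [← log_le_log_iff (by positivity) (by positivity), log_mul (by positivity) (exp_ne_zero _),
    log_mul (by positivity) (exp_ne_zero _), log_exp, log_exp, log_rpow hs, log_rpow hs']
  have hlog : log s' - log s ≤ (s' - s) / s := by
    rw [← log_div hs'.ne' hs.ne', sub_div, div_self hs.ne']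
    exact log_le_sub_one_of_pos (by positivity)
  have hgain : d / 2 * ((s' - s) / s) ≤ a / s - a / s' := by
    rw [div_sub_div _ _ hs.ne' hs'.ne', mul_div_assoc', div_le_div_iff₀ hs (by positivity)]
    nlinarith [mul_le_mul_of_nonneg_right h (mul_nonneg (sub_nonneg.2 hss') hs.le)]
  nlinarith [mul_le_mul_of_nonneg_left hlog (by positivity : (0:ℝ) ≤ d / 2)]

noncomputable def heatProfile (d : ℕ) (σ η ρ : ℝ) : ℝ :=
  η ^ (-(d:ℝ)/2) * exp (-ρ^2 / (2*σ^2*η))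

section heatProfile

variable {d : ℕ} {σ η η₀ ρ ρ' : ℝ}

lemma heatProfile_eq : heatProfile d σ η ρ = η ^ (-(d:ℝ)/2) * exp (-(ρ^2 / (2*σ^2) / η)) := by
  rw [heatProfile, neg_div (2*σ^2*η), div_div]

lemma heatProfile_one : heatProfile d σ η 1 = η ^ (-(d:ℝ)/2) * exp (-1 / (2*σ^2*η)) := by
  rw [heatProfile, one_pow]

lemma heatProfile_nonneg (hη : 0 ≤ η) : 0 ≤ heatProfile d σ η ρ := by
  unfold heatProfile; positivity

lemma heatProfile_scale (hη : 0 ≤ η) {R : ℝ} (hR : 0 < R) :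
    (η * R^2) ^ (-(d:ℝ)/2) * exp (-(ρ * R)^2 / (2*σ^2*(η * R^2)))
      = R ^ (-(d:ℝ)) * heatProfile d σ η ρ := by
  have hR2 : (R^2) ^ (-(d:ℝ)/2) = R ^ (-(d:ℝ)) := by
    rw [← rpow_natCast, ← rpow_mul hR.le]; congr 1; push_cast; ring
  have hexp : -(ρ * R)^2 / (2*σ^2*(η * R^2)) = -ρ^2 / (2*σ^2*η) := by
    rw [mul_pow, ← mul_assoc, ← neg_mul, mul_div_mul_right _ _ (by positivity)]
  rw [heatProfile, mul_rpow hη (by positivity), hR2, hexp]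
  ring

lemma heatProfile_le_rpow (hη : 0 ≤ η) : heatProfile d σ η ρ ≤ η ^ (-(d:ℝ)/2) := by
  rw [heatProfile_eq]
  refine mul_le_of_le_one_right (by positivity) (exp_le_one_iff.2 ?_)
  have : 0 ≤ ρ^2 / (2*σ^2) / η := by positivity
  linarith

lemma heatProfile_anti_radius (hη : 0 ≤ η) (hρ : ρ^2 ≤ ρ'^2) :
    heatProfile d σ η ρ' ≤ heatProfile d σ η ρ := by
  rw [heatProfile_eq, heatProfile_eq]
  gcongr

lemma heatProfile_mul_radius (k : ℝ) :
    heatProfile d σ η (k * ρ) = heatProfile d (σ / k) η ρ := by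
  simp only [heatProfile, div_eq_mul_inv, mul_pow, mul_inv, inv_pow, inv_inv]
  ring_nf

lemma heatProfile_le_factorial (hσ : σ ≠ 0) (hη : 0 < η) (hρ : ρ ≠ 0) :
    heatProfile d σ η ρ ≤ d ! * (2*σ^2/ρ^2)^d * η ^ ((d:ℝ)/2) := by
  have hexp := exp_neg_div_le_factorial_mul_pow d (c := ρ^2 / (2*σ^2)) (by positivity) hη
  have hη_pow : η ^ (-(d:ℝ)/2) * η ^ d = η ^ ((d:ℝ)/2) := by
    rw [← rpow_natCast, ← rpow_add hη]; congr 1; ring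
  calc heatProfile d σ η ρ ≤ η ^ (-(d:ℝ)/2) * (d ! * (η / (ρ^2 / (2*σ^2))) ^ d) := by
        rw [heatProfile_eq]; gcongr
    _ = d ! * (2*σ^2/ρ^2)^d * (η ^ (-(d:ℝ)/2) * η ^ d) := by
        simp only [div_div_eq_mul_div, div_pow, mul_pow]; ring
    _ = d ! * (2*σ^2/ρ^2)^d * η ^ ((d:ℝ)/2) := by rw [hη_pow]

lemma heatProfile_mono_time (hη : 0 < η) (hle : η ≤ η₀) (h : d / 2 * η₀ ≤ ρ^2 / (2*σ^2)) :
    heatProfile d σ η ρ ≤ heatProfile d σ η₀ ρ := by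
  rw [heatProfile_eq, heatProfile_eq]
  exact rpow_neg_half_mul_exp_neg_div_le d hη hle h

lemma rpow_div_mul_heatProfile_le (hη₀ : 0 < η₀) (hle : η₀ ≤ η) :
    (η₀ / η) ^ ((d:ℝ)/2) * heatProfile d σ η₀ ρ ≤ heatProfile d σ η ρ := by
  have hη : 0 < η := hη₀.trans_le hle
  have hpow : (η₀ / η) ^ ((d:ℝ)/2) * η₀ ^ (-(d:ℝ)/2) = η ^ (-(d:ℝ)/2) := by
    rw [div_rpow hη₀.le hη.le, neg_div, rpow_neg hη₀.le, rpow_neg hη.le]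
    field_simp
  rw [heatProfile_eq, heatProfile_eq, ← mul_assoc, hpow]
  gcongr

lemma heatProfile_le_of_quarter_le_or_half_le (hσ : σ ≠ 0) (hη : 0 < η) (hη5 : η ≤ 5)
    (h : 1/4 ≤ η ∨ 1/2 ≤ ρ) :
    heatProfile d σ η ρ ≤ max (4 ^ ((d:ℝ)/2)) (d ! * (8*σ^2)^d * 5 ^ ((d:ℝ)/2)) := by
  rcases h with hη4 | hρ
  · refine le_max_of_le_left ((heatProfile_le_rpow hη.le).trans ?_)
    calc η ^ (-(d:ℝ)/2) ≤ (4⁻¹ : ℝ) ^ (-(d:ℝ)/2) :=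
          rpow_le_rpow_of_nonpos (by norm_num) (by linarith) (by rw [neg_div, neg_nonpos]; positivity)
      _ = 4 ^ ((d:ℝ)/2) := by rw [inv_rpow (by norm_num), ← rpow_neg (by norm_num), neg_div, neg_neg]
  · refine le_max_of_le_right ?_
    calc heatProfile d σ η ρ ≤ heatProfile d σ η (1/2) :=
          heatProfile_anti_radius hη.le (pow_le_pow_left₀ (by norm_num) hρ 2)
      _ ≤ d ! * (2*σ^2/(1/2)^2)^d * η ^ ((d:ℝ)/2) :=
          heatProfile_le_factorial hσ hη (by norm_num)
      _ ≤ d ! * (8*σ^2)^d * 5 ^ ((d:ℝ)/2) := by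
          rw [show 2*σ^2/(1/2)^2 = 8*σ^2 by ring]; gcongr

lemma rpow_mul_heatProfile_le_heatProfile {η₁ : ℝ} (hη₁ : 0 < η₁) (h₁₀ : η₁ ≤ η₀)
    (hle : η₀ ≤ η) (hη5 : η ≤ 5) (hρ0 : 0 ≤ ρ) (hρ4 : ρ ≤ 4) :
    (η₁ / 5) ^ ((d:ℝ)/2) * heatProfile d (σ/4) η₀ 1 ≤ heatProfile d σ η ρ := by
  have hη₀ : 0 < η₀ := hη₁.trans_le h₁₀
  calc (η₁ / 5) ^ ((d:ℝ)/2) * heatProfile d (σ/4) η₀ 1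
      ≤ (η₀ / η) ^ ((d:ℝ)/2) * heatProfile d (σ/4) η₀ 1 := by
        gcongr
        · exact heatProfile_nonneg hη₀.le
        · exact hη₀.trans_le hle
    _ ≤ heatProfile d (σ/4) η 1 := rpow_div_mul_heatProfile_le hη₀ hle
    _ = heatProfile d σ η 4 := by rw [← heatProfile_mul_radius, mul_one]
    _ ≤ heatProfile d σ η ρ :=
        heatProfile_anti_radius (hη₀.trans_le hle).le (pow_le_pow_left₀ hρ0 hρ4 2)

lemma heatProfile_le_heatProfile_one (hη : 0 < η) (hle : η ≤ η₀) (hρ : 1 ≤ ρ)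
    (hη₀ : η₀ ≤ (σ^2 * d)⁻¹) :
    heatProfile d σ η ρ ≤ heatProfile d σ η₀ 1 := by
  have hmax : d / 2 * η₀ ≤ 1 ^ 2 / (2*σ^2) :=
    calc d / 2 * η₀ ≤ d / 2 * (σ^2 * d)⁻¹ := by gcongr
      _ = ((d:ℝ) * (d:ℝ)⁻¹) / (2*σ^2) := by field_simp
      _ ≤ 1 ^ 2 / (2*σ^2) := by rw [one_pow]; gcongr; exact mul_inv_le_one
  calc heatProfile d σ η ρ ≤ heatProfile d σ η 1 :=
        heatProfile_anti_radius hη.le (by nlinarith)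
    _ ≤ heatProfile d σ η₀ 1 := heatProfile_mono_time hη hle hmax

end heatProfile

theorem stmt2_general (d : ℕ) (Cl Cu σl σu : ℝ)
    (hCl : 0 < Cl) (hCu : 0 < Cu) (hσu : 0 < σu) :
    let δ : ℝ → ℝ → ℝ := fun σ ε => ε ^ (-(d:ℝ)/2) * Real.exp (-1/(2*σ^2*ε))
    let S : Set ℝ := {ε | 0 < ε ∧ δ σu ε = 1/2}
    let ε₀ : ℝ := if S.Nonempty then min (sInf S) (min 1 (σu^2*(d:ℝ))⁻¹)
                  else min 1 (σu^2*(d:ℝ))⁻¹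
    ∃ C : ℝ, 0 < C ∧
      ∀ (t₀ : ℝ) (x₀ : EuclideanSpace ℝ (Fin d)) (R ε : ℝ),
        R ∈ Set.Ioc (0:ℝ) (1/4) → ε ∈ Set.Ioc (0:ℝ) (ε₀/2) →
        ∀ p : ℝ → EuclideanSpace ℝ (Fin d) → ℝ,
        (∀ t x, t₀ - ε*R^2 < t →
          Cl * (t - (t₀ - ε*R^2)) ^ (-(d:ℝ)/2) *
              Real.exp (-‖x - x₀‖^2 / (2*σl^2*(t - (t₀ - ε*R^2)))) ≤ p t x ∧
          p t x ≤ Cu * (t - (t₀ - ε*R^2)) ^ (-(d:ℝ)/2) *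
              Real.exp (-‖x - x₀‖^2 / (2*σu^2*(t - (t₀ - ε*R^2))))) →
        ∀ t x, t₀ ≤ t → t ≤ t₀ + 4*R^2 → ‖x - x₀‖ ≤ 4*R →
          (¬(t ≤ t₀ + R^2/4 ∧ ‖x - x₀‖ ≤ R/2) → p t x ≤ C * R ^ (-(d:ℝ))) ∧
          (t₀ + ε₀*R^2/2 ≤ t → C⁻¹ * R ^ (-(d:ℝ)) * δ (σl/4) (ε₀/2 + ε) ≤ p t x) ∧
          (t < t₀ + ε₀*R^2/2 → R < ‖x - x₀‖ →
            p t x ≤ C * R ^ (-(d:ℝ)) * δ σu (ε₀/2 + ε)) := by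
  intro δ S ε₀
  obtain ⟨hε₀1, hε₀d⟩ : ε₀ ≤ 1 ∧ ε₀ ≤ (σu^2*d)⁻¹ := by
    rw [← le_min_iff]; dsimp only [ε₀]; split_ifs <;> simp
  set K := max ((4:ℝ) ^ ((d:ℝ)/2)) (d ! * (8*σu^2)^d * 5 ^ ((d:ℝ)/2))
  set C := max (max (Cu * K) (Cl * (ε₀/2/5) ^ ((d:ℝ)/2))⁻¹) Cu
  refine ⟨C, lt_max_of_lt_right hCu, ?_⟩
  rintro t₀ x₀ R ε ⟨hR, -⟩ ⟨hε, hεε₀⟩ p hp t x ht₀ ht hx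
  obtain ⟨η, hs⟩ : ∃ η, t - (t₀ - ε*R^2) = η * R^2 :=
    ⟨_, (div_mul_cancel₀ _ (pow_ne_zero 2 hR.ne')).symm⟩
  obtain ⟨ρ, hr⟩ : ∃ ρ, ‖x - x₀‖ = ρ * R := ⟨_, (div_mul_cancel₀ _ hR.ne').symm⟩
  have hR2 : 0 < R^2 := by positivity
  have hε₀ : 0 < ε₀ := by linarith
  have hη : 0 < η := pos_of_mul_pos_left (hs ▸ by nlinarith) hR2.le
  have hη5 : η ≤ 5 := le_of_mul_le_mul_right (hs ▸ by nlinarith) hR2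
  have hρ0 : 0 ≤ ρ := nonneg_of_mul_nonneg_left (hr ▸ norm_nonneg _) hR
  have hρ4 : ρ ≤ 4 := le_of_mul_le_mul_right (hr ▸ hx) hR
  obtain ⟨hlow, hup⟩ := hp t x (by nlinarith)
  rw [hs, hr, mul_assoc, heatProfile_scale hη.le hR, ← mul_assoc] at hlow hup
  simp only [δ, ← heatProfile_one]
  refine ⟨fun hout => ?_, fun hlate => ?_, fun hearly hfar => ?_⟩
  · have hoff : 1/4 ≤ η ∨ 1/2 ≤ ρ := by
      by_contra! h
      exact hout ⟨by nlinarith, by nlinarith⟩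
    have hK := heatProfile_le_of_quarter_le_or_half_le (d := d) hσu.ne' hη hη5 hoff
    have hCuK : Cu * K ≤ C := le_max_of_le_left (le_max_left _ _)
    calc p t x ≤ Cu * R ^ (-(d:ℝ)) * K := hup.trans (by gcongr)
      _ ≤ C * R ^ (-(d:ℝ)) := by rw [mul_right_comm]; gcongr
  · have hle : ε₀/2 + ε ≤ η := le_of_mul_le_mul_right (hs ▸ by nlinarith) hR2
    have hC : C⁻¹ ≤ Cl * (ε₀/2/5) ^ ((d:ℝ)/2) :=
      inv_le_of_inv_le₀ (by positivity) (le_max_of_le_left (le_max_right _ _))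
    have hH := rpow_mul_heatProfile_le_heatProfile (d := d) (σ := σl) (η₁ := ε₀/2) (by positivity)
      (by linarith) hle hη5 hρ0 hρ4
    calc C⁻¹ * R ^ (-(d:ℝ)) * heatProfile d (σl/4) (ε₀/2 + ε) 1
        ≤ Cl * (ε₀/2/5) ^ ((d:ℝ)/2) * R ^ (-(d:ℝ)) * heatProfile d (σl/4) (ε₀/2 + ε) 1 := by
          gcongr; exact heatProfile_nonneg (by positivity)
      _ ≤ Cl * R ^ (-(d:ℝ)) * heatProfile d σl η ρ := by
          rw [mul_right_comm Cl, mul_assoc (Cl * _)]; gcongr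
      _ ≤ p t x := hlow
  · have hle : η ≤ ε₀/2 + ε := le_of_mul_le_mul_right (hs ▸ by nlinarith) hR2
    have hρ : 1 ≤ ρ := le_of_mul_le_mul_right (by nlinarith) hR
    exact hup.trans (mul_le_mul (by gcongr; exact le_max_right _ _)
      (heatProfile_le_heatProfile_one hη hle hρ (by linarith)) (heatProfile_nonneg hη.le) (by positivity))

/-- **Pointwise Gaussian transition-density estimates** (Lemma on `p_ε`).
Given two-sided Gaussian bounds with constants `C̲, C̄, σ̲, σ̄` for a kernel `p` started at
`(t₀ - εR², x₀)`, there is a constant `C` depending only on `d, C̲, C̄, σ̲, σ̄` such that, on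
the parabolic cylinder `t₀ ≤ t ≤ t₀ + 4R²`, `|x-x₀| ≤ 4R`:
(i) `p ≤ C R^{-d}` off `γ(1/4;1/2)`;
(ii) `p ≥ C⁻¹ R^{-d} δ_{σ̲/4}(ε₀/2+ε)` for `t ≥ t₀ + ε₀R²/2`;
(iii) `p ≤ C R^{-d} δ_{σ̄}(ε₀/2+ε)` for `t < t₀ + ε₀R²/2`, `|x-x₀| > R`. -/
theorem stmt2 (d : ℕ) (hd : 1 ≤ d) (Cl Cu σl σu : ℝ)
    (hCl : 0 < Cl) (hCu : 0 < Cu) (hσl : 0 < σl) (hσu : 0 < σu) :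
    let δ : ℝ → ℝ → ℝ := fun σ ε => ε ^ (-(d:ℝ)/2) * Real.exp (-1/(2*σ^2*ε))
    let S : Set ℝ := {ε | 0 < ε ∧ δ σu ε = 1/2}
    let ε₀ : ℝ := if S.Nonempty then min (sInf S) (min 1 (σu^2*(d:ℝ))⁻¹)
                  else min 1 (σu^2*(d:ℝ))⁻¹
    ∃ C : ℝ, 0 < C ∧
      ∀ (t₀ : ℝ) (x₀ : EuclideanSpace ℝ (Fin d)) (R ε : ℝ),
        R ∈ Set.Ioc (0:ℝ) (1/4) → ε ∈ Set.Ioc (0:ℝ) (ε₀/2) →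
        ∀ p : ℝ → EuclideanSpace ℝ (Fin d) → ℝ,
        (∀ t x, t₀ - ε*R^2 < t →
          Cl * (t - (t₀ - ε*R^2)) ^ (-(d:ℝ)/2) *
              Real.exp (-‖x - x₀‖^2 / (2*σl^2*(t - (t₀ - ε*R^2)))) ≤ p t x ∧
          p t x ≤ Cu * (t - (t₀ - ε*R^2)) ^ (-(d:ℝ)/2) *
              Real.exp (-‖x - x₀‖^2 / (2*σu^2*(t - (t₀ - ε*R^2))))) →
        ∀ t x, t₀ ≤ t → t ≤ t₀ + 4*R^2 → ‖x - x₀‖ ≤ 4*R →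
          (¬(t ≤ t₀ + R^2/4 ∧ ‖x - x₀‖ ≤ R/2) → p t x ≤ C * R ^ (-(d:ℝ))) ∧
          (t₀ + ε₀*R^2/2 ≤ t → C⁻¹ * R ^ (-(d:ℝ)) * δ (σl/4) (ε₀/2 + ε) ≤ p t x) ∧
          (t < t₀ + ε₀*R^2/2 → R < ‖x - x₀‖ →
            p t x ≤ C * R ^ (-(d:ℝ)) * δ σu (ε₀/2 + ε)) :=
  stmt2_general d Cl Cu σl σu hCl hCu hσu
end

section
/- Let N ≥ 1 and let α¹, …, α^N ∈ (0,1) with Σ_{i=1}^N α^i = 1. For μ, ν ∈ ℝ^N define A[μ] = Σ_{i=1}^N α^i μ^i and f^i(μ, ν) = −(1/2)(ν^i)² + (1/2)A[μ]² − A[μ] μ^i for i = 1, …, N. Then: (i) for each i, −f^i(μ, ν) ≤ (1/2)((μ^i)² + (ν^i)²); (ii) Σ_{i=1}^N α^i f^i(μ, ν) = −(1/2) Σ_{i=1}^N α^i (ν^i)² − (1/2) A[μ]² ≤ 0; and (iii) the vectors −e₁, …, −e_N, (α¹, …, α^N) positively span ℝ^N, where e₁, …, e_N is the standard basis. Consequently,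 the generator of the incomplete-equilibrium BSDE system satisfies the a-priori boundedness condition (AB) with l ≡ 0 and this positively spanning set. -/
open Matrix

/-!
The lower bound on `f^i`, and with it (AB) for `-e_i`, is `A μ^i ≤ ½ A² + ½ (μ^i)²`, i.e.
`(A - μ^i)² ≥ 0`. Averaging `f^i` with the weights `α^i` collapses `Σ α^i μ^i` to `A` and
`Σ α^i` to `1`, which gives (ii) and (AB) for `α`.
Every `v` is a nonnegative combination of `-e_1, …, -e_N, α`: take `c α - (c α - v)` with `c`
large enough that `c α^i ≥ v^i` for all `i`, which is possible because every `α^i > 0`.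
-/

def PositivelySpans {κ E : Type*} [Fintype κ] [AddCommMonoid E] [Module ℝ E] (a : κ → E) :
    Prop :=
  (∀ k, a k ≠ 0) ∧ ∀ v : E, ∃ lam : κ → ℝ, (∀ k, 0 ≤ lam k) ∧ ∑ k, lam k • a k = v

section Generator

variable {ι : Type*} [Fintype ι] (α : ι → ℝ)

noncomputable def equilibriumGenerator (μ ν : ι → ℝ) (i : ι) : ℝ :=
  -(1/2) * (ν i)^2 + (1/2) * (α ⬝ᵥ μ)^2 - (α ⬝ᵥ μ) * μ i

lemma neg_equilibriumGenerator_le (μ ν : ι → ℝ) (i : ι) :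
    -equilibriumGenerator α μ ν i ≤ (1/2) * ((μ i)^2 + (ν i)^2) := by
  unfold equilibriumGenerator
  nlinarith [sq_nonneg (μ i - α ⬝ᵥ μ)]

variable {α}

lemma dotProduct_equilibriumGenerator (hsum : ∑ i, α i = 1) (μ ν : ι → ℝ) :
    α ⬝ᵥ equilibriumGenerator α μ ν
      = -(1/2) * (∑ i, α i * (ν i)^2) - (1/2) * (α ⬝ᵥ μ)^2 := by
  have hterm : ∀ i, α i * equilibriumGenerator α μ ν i
      = -(1/2) * (α i * (ν i)^2) + (1/2) * (α ⬝ᵥ μ)^2 * α i - (α ⬝ᵥ μ) * (α i * μ i) := by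
    intro i
    unfold equilibriumGenerator
    ring
  rw [dotProduct, Finset.sum_congr rfl fun i _ => hterm i, Finset.sum_sub_distrib,
    Finset.sum_add_distrib, ← Finset.mul_sum, ← Finset.mul_sum, ← Finset.mul_sum, hsum]
  change _ + _ - (α ⬝ᵥ μ) * (α ⬝ᵥ μ) = _
  ring

lemma dotProduct_equilibriumGenerator_nonpos (hα : ∀ i, 0 ≤ α i) (hsum : ∑ i, α i = 1)
    (μ ν : ι → ℝ) : α ⬝ᵥ equilibriumGenerator α μ ν ≤ 0 := by
  have hν : 0 ≤ ∑ i, α i * (ν i)^2 := Finset.sum_nonneg fun i _ => mul_nonneg (hα i) (sq_nonneg _)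
  rw [dotProduct_equilibriumGenerator hsum]
  nlinarith [sq_nonneg (α ⬝ᵥ μ)]

end Generator

section SpanningFamily

variable {N : ℕ} {α : Fin N → ℝ}

def spanningFamily (α : Fin N → ℝ) : Fin (N + 1) → Fin N → ℝ :=
  fun k => Fin.lastCases α (fun i => -Pi.single i 1) k

@[simp] lemma spanningFamily_last : spanningFamily α (Fin.last N) = α := by
  simp [spanningFamily]

@[simp] lemma spanningFamily_castSucc (i : Fin N) :
    spanningFamily α i.castSucc = -Pi.single i 1 := by
  simp [spanningFamily]

lemma neg_single_dotProduct (i : Fin N) (w : Fin N → ℝ) :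
    (-Pi.single i 1 : Fin N → ℝ) ⬝ᵥ w = -w i := by
  rw [neg_dotProduct, single_dotProduct, one_mul]

lemma spanningFamily_ne_zero (hN : 1 ≤ N) (hα : ∀ i, 0 < α i) (k : Fin (N + 1)) :
    spanningFamily α k ≠ 0 := by
  induction k using Fin.lastCases with
  | last =>
    rw [spanningFamily_last]
    exact fun h => (hα ⟨0, hN⟩).ne' (congrFun h _)
  | cast i =>
    rw [spanningFamily_castSucc]
    exact fun h => by simpa using congrFun h i

lemma exists_spanningFamily_combination (hα : ∀ i, 0 < α i) (v : Fin N → ℝ) :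
    ∃ lam : Fin (N + 1) → ℝ, (∀ k, 0 ≤ lam k) ∧ ∑ k, lam k • spanningFamily α k = v := by
  set c := ∑ j, |v j| / α j
  have hc : ∀ i, v i ≤ c * α i := fun i => by
    have hi : |v i| / α i ≤ c :=
      Finset.single_le_sum (f := fun j => |v j| / α j)
        (fun j _ => div_nonneg (abs_nonneg _) (hα j).le) (Finset.mem_univ i)
    calc v i ≤ |v i| := le_abs_self _
      _ = |v i| / α i * α i := (div_mul_cancel₀ _ (hα i).ne').symm
      _ ≤ c * α i := mul_le_mul_of_nonneg_right hi (hα i).le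
  refine ⟨Fin.lastCases c fun i => c * α i - v i, fun k => ?_, ?_⟩
  · induction k using Fin.lastCases with
    | last => simpa using Finset.sum_nonneg fun j _ => div_nonneg (abs_nonneg (v j)) (hα j).le
    | cast i => simpa using hc i
  · ext j
    simp [Fin.sum_univ_castSucc, Finset.sum_apply, Pi.single_apply]

theorem positivelySpans_spanningFamily (hN : 1 ≤ N) (hα : ∀ i, 0 < α i) :
    PositivelySpans (spanningFamily α) :=
  ⟨spanningFamily_ne_zero hN hα, exists_spanningFamily_combination hα⟩

lemma spanningFamily_dotProduct_equilibriumGenerator_le (hα : ∀ i, 0 ≤ α i)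
    (hsum : ∑ i, α i = 1) (μ ν : Fin N → ℝ) (k : Fin (N + 1)) :
    spanningFamily α k ⬝ᵥ equilibriumGenerator α μ ν
      ≤ (1/2) * ((spanningFamily α k ⬝ᵥ μ)^2 + (spanningFamily α k ⬝ᵥ ν)^2) := by
  induction k using Fin.lastCases with
  | last =>
    rw [spanningFamily_last]
    have := dotProduct_equilibriumGenerator_nonpos hα hsum μ ν
    nlinarith [sq_nonneg (α ⬝ᵥ μ), sq_nonneg (α ⬝ᵥ ν)]
  | cast i =>
    simp only [spanningFamily_castSucc, neg_single_dotProduct, neg_sq]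
    exact neg_equilibriumGenerator_le α μ ν i

end SpanningFamily

/-- The generator `f` of the incomplete-equilibrium BSDE system, with weights
`α^i ∈ (0,1)`, `Σ α^i = 1` and `A[μ] = Σ α^i μ^i`, satisfies:
(i) `-f^i ≤ ½((μ^i)² + (ν^i)²)`;
(ii) `Σ α^i f^i = -½ Σ α^i (ν^i)² - ½ A[μ]² ≤ 0`;
(iii) the vectors `-e₁, …, -e_N, (α¹,…,α^N)` positively span `ℝ^N`;
consequently `f` satisfies condition (AB) with `l ≡ 0` and this spanning set. -/
theorem stmt14 (N : ℕ) (hN : 1 ≤ N) (α : Fin N → ℝ)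
    (hα : ∀ i, α i ∈ Set.Ioo (0:ℝ) 1) (hsum : ∑ i, α i = 1) :
    let A : (Fin N → ℝ) → ℝ := fun μ => ∑ i, α i * μ i
    let f : (Fin N → ℝ) → (Fin N → ℝ) → (Fin N → ℝ) :=
      fun μ ν i => -(1/2) * (ν i)^2 + (1/2) * (A μ)^2 - A μ * μ i
    (∀ μ ν i, -(f μ ν i) ≤ (1/2) * ((μ i)^2 + (ν i)^2)) ∧
    (∀ μ ν, (∑ i, α i * f μ ν i = -(1/2) * (∑ i, α i * (ν i)^2) - (1/2) * (A μ)^2) ∧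
      ∑ i, α i * f μ ν i ≤ 0) ∧
    (let a : Fin (N+1) → (Fin N → ℝ) :=
       fun k => Fin.lastCases (fun i => α i) (fun (i : Fin N) => -(Pi.single i 1)) k
     (∀ k, a k ≠ 0) ∧
     (∀ v : Fin N → ℝ, ∃ lam : Fin (N+1) → ℝ, (∀ k, 0 ≤ lam k) ∧ ∑ k, lam k • a k = v) ∧
     (∀ μ ν k, (a k) ⬝ᵥ (f μ ν) ≤ 0 + (1/2) * (((a k) ⬝ᵥ μ)^2 + ((a k) ⬝ᵥ ν)^2))) := by
  intro A f
  have hpos : ∀ i, 0 < α i := fun i => (hα i).1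
  have hnonneg : ∀ i, 0 ≤ α i := fun i => (hpos i).le
  obtain ⟨hne, hspan⟩ := positivelySpans_spanningFamily hN hpos
  refine ⟨neg_equilibriumGenerator_le α,
    fun μ ν => ⟨dotProduct_equilibriumGenerator hsum μ ν,
      dotProduct_equilibriumGenerator_nonpos hnonneg hsum μ ν⟩,
    hne, hspan, fun μ ν k => ?_⟩
  rw [zero_add]
  exact spanningFamily_dotProduct_equilibriumGenerator_le hnonneg hsum μ ν k
end

section
/- Let N ≥ 1 and α₁, …, α_N > 0. For y = (y₁,…,y_N) ∈ ℝ^N define G_k(y) = cosh(α_k y_k), S_k(y) = sinh(α_k y_k), and recursively H_{N+1}(y) = 0, H_k(y) = exp(G_k(y) + H_{k+1}(y)) for k = N, …, 1; set h = H₁, P₀ = 1, P_k = Π_{i=1}^k H_i, A_i = α_i S_i P_i, and Ã_i = α_i² G_i P_i. Then h is smooth, and for all y ∈ ℝ^N and all i, j ∈ {1,…,N}: (i) ∂h/∂y_i (y) = A_i(y); (ii) ∂²h/∂y_i∂y_j (y) = Ã_i(y)·1_{{i=j}} + A_i(y)A_j(y) Σ_{k=1}^{min(i,j)} P_k(y)^{-1};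 and (iii) for any d ≥ 1 and any vectors ζ¹, …, ζ^N ∈ ℝ^d, Σ_{i,j=1}^N (∂²h/∂y_i∂y_j)(y) ⟨ζ^i, ζ^j⟩ = Σ_{i=1}^N Ã_i(y) |ζ^i|² + Σ_{i=1}^N P_i(y)^{-1} | Σ_{j=i}^N A_j(y) ζ^j |². -/
open scoped RealInnerProductSpace

/-- The iterated-exponential hierarchy (0-based indexing, `k = 0, …, N`, with
`Hrec N α y N = 0` and `Hrec N α y k = exp(cosh(α_k y_k) + Hrec N α y (k+1))`);
`h = Hrec N α · 0` is the Lyapunov function of Bensoussan–Frehse type. -/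
noncomputable def Hrec (N : ℕ) (α y : Fin N → ℝ) (k : ℕ) : ℝ :=
  if h : k < N then
    Real.exp (Real.cosh (α ⟨k, h⟩ * y ⟨k, h⟩) + Hrec N α y (k + 1))
  else 0
termination_by N - k
decreasing_by omega

/-- `P_m = ∏_{j < m} H_j` (0-based version of `P_k = ∏_{i=1}^k H_i`, with `P_0 = 1`). -/
noncomputable def Pprod (N : ℕ) (α y : Fin N → ℝ) (m : ℕ) : ℝ :=
  ∏ j ∈ Finset.range m, Hrec N α y j

/-- `A_i = α_i sinh(α_i y_i) P_{i+1}` (0-based version of `A_i = α_i S_i P_i`). -/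
noncomputable def Afun (N : ℕ) (α y : Fin N → ℝ) (i : Fin N) : ℝ :=
  α i * Real.sinh (α i * y i) * Pprod N α y (i.val + 1)

/-- `Ã_i = α_i² cosh(α_i y_i) P_{i+1}` (0-based version of `Ã_i = α_i² G_i P_i`). -/
noncomputable def Atfun (N : ℕ) (α y : Fin N → ℝ) (i : Fin N) : ℝ :=
  (α i)^2 * Real.cosh (α i * y i) * Pprod N α y (i.val + 1)

section auxLemmas

variable {N : ℕ} {α : Fin N → ℝ}

lemma Hrec_of_lt (y : Fin N → ℝ) {k : ℕ} (h : k < N) :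
    Hrec N α y k = Real.exp (Real.cosh (α ⟨k, h⟩ * y ⟨k, h⟩) + Hrec N α y (k + 1)) := by
  rw [Hrec, dif_pos h]

lemma Hrec_of_ge (y : Fin N → ℝ) {k : ℕ} (h : ¬ k < N) : Hrec N α y k = 0 := by
  rw [Hrec, dif_neg h]

lemma Hrec_pos (y : Fin N → ℝ) {k : ℕ} (h : k < N) : 0 < Hrec N α y k := by
  rw [Hrec_of_lt y h]; exact Real.exp_pos _

lemma Pprod_pos (y : Fin N → ℝ) {m : ℕ} (h : m ≤ N) : 0 < Pprod N α y m :=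
  Finset.prod_pos fun _ hj => Hrec_pos y (lt_of_lt_of_le (Finset.mem_range.mp hj) h)

lemma contDiff_Hrec_aux (n : ℕ) : ∀ k : ℕ, N ≤ k + n →
    ContDiff ℝ (⊤ : ℕ∞) (fun y : Fin N → ℝ => Hrec N α y k) := by
  induction n with
  | zero =>
    intro k hk
    have h : ¬ k < N := by omega
    have : (fun y : Fin N → ℝ => Hrec N α y k) = fun _ => 0 := funext fun y => Hrec_of_ge y h
    rw [this]; exact contDiff_const
  | succ n ih =>
    intro k hk
    by_cases h : k < N
    · have : (fun y : Fin N → ℝ => Hrec N α y k) =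
        fun y => Real.exp (Real.cosh (α ⟨k, h⟩ * y ⟨k, h⟩) + Hrec N α y (k + 1)) :=
        funext fun y => Hrec_of_lt y h
      rw [this]
      refine Real.contDiff_exp.comp (ContDiff.add ?_ (ih (k + 1) (by omega)))
      exact Real.contDiff_cosh.comp
        (contDiff_const.mul (contDiff_apply (𝕜 := ℝ) (E := ℝ) (⟨k, h⟩ : Fin N)))
    · have : (fun y : Fin N → ℝ => Hrec N α y k) = fun _ => 0 := funext fun y => Hrec_of_ge y h
      rw [this]; exact contDiff_const

lemma contDiff_Hrec (k : ℕ) : ContDiff ℝ (⊤ : ℕ∞) (fun y : Fin N → ℝ => Hrec N α y k) :=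
  contDiff_Hrec_aux N k (by omega)

lemma diff_Hrec (k : ℕ) (y : Fin N → ℝ) :
    DifferentiableAt ℝ (fun y : Fin N → ℝ => Hrec N α y k) y :=
  ((contDiff_Hrec k).differentiable (by simp)).differentiableAt

lemma fderiv_Hrec_aux (n : ℕ) : ∀ k : ℕ, N ≤ k + n → ∀ (y : Fin N → ℝ) (i : Fin N),
    fderiv ℝ (fun y => Hrec N α y k) y (Pi.single i 1) =
      if k ≤ i.val then
        α i * Real.sinh (α i * y i) * ∏ j ∈ Finset.Ico k (i.val + 1), Hrec N α y j
      else 0 := by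
  induction n with
  | zero =>
    intro k hk y i
    have h : ¬ k < N := by omega
    have hfun : (fun y : Fin N → ℝ => Hrec N α y k) = fun _ => 0 :=
      funext fun y => Hrec_of_ge y h
    have hi : ¬ k ≤ i.val := by have := i.isLt; omega
    rw [hfun, fderiv_const_apply, if_neg hi]
    simp
  | succ n ih =>
    intro k hk y i
    by_cases h : k < N
    · set c : Fin N := ⟨k, h⟩ with hc
      set f1 : (Fin N → ℝ) → ℝ := fun y => Real.cosh (α c * y c) with hf1
      set f2 : (Fin N → ℝ) → ℝ := fun y => Hrec N α y (k + 1) with hf2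
      have hfun : (fun y : Fin N → ℝ => Hrec N α y k) = fun y => Real.exp (f1 y + f2 y) :=
        funext fun y => Hrec_of_lt y h
      have hL : HasFDerivAt (fun y : Fin N → ℝ => α c * y c)
          (α c • (ContinuousLinearMap.proj c : (Fin N → ℝ) →L[ℝ] ℝ)) y := by
        exact (ContinuousLinearMap.proj c : (Fin N → ℝ) →L[ℝ] ℝ).hasFDerivAt.const_mul (α c)
      have h1 : HasFDerivAt f1
          (Real.sinh (α c * y c) • (α c • (ContinuousLinearMap.proj c : (Fin N → ℝ) →L[ℝ] ℝ))) y :=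
        by have := (Real.hasDerivAt_cosh (α c * y c)).comp_hasFDerivAt y hL; exact this
      have h2 : HasFDerivAt f2 (fderiv ℝ f2 y) y := (diff_Hrec (k + 1) y).hasFDerivAt
      have h3 : HasFDerivAt (fun y : Fin N → ℝ => Hrec N α y k)
          (Real.exp (f1 y + f2 y) •
            ((Real.sinh (α c * y c) • (α c • (ContinuousLinearMap.proj c : (Fin N → ℝ) →L[ℝ] ℝ)))
              + fderiv ℝ f2 y)) y := by
        rw [hfun]; exact (h1.add h2).exp
      rw [h3.fderiv]
      have hproj : (ContinuousLinearMap.proj c : (Fin N → ℝ) →L[ℝ] ℝ) (Pi.single i 1)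
          = if c = i then 1 else 0 := by
        simp [Pi.single_apply]
      have hf2d := ih (k + 1) (by omega) y i
      rw [show fderiv ℝ f2 y (Pi.single i 1) =
        fderiv ℝ (fun y : Fin N → ℝ => Hrec N α y (k+1)) y (Pi.single i 1) from rfl] at *
      simp only [ContinuousLinearMap.smul_apply, ContinuousLinearMap.add_apply,
        ContinuousLinearMap.coe_smul', Pi.smul_apply, hproj, hf2d, smul_eq_mul]
      rw [show fderiv ℝ f2 y (Pi.single i 1) = _ from hf2d]
      have hH : Real.exp (f1 y + f2 y) = Hrec N α y k := (Hrec_of_lt y h).symm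
      rcases lt_trichotomy k i.val with hki | hki | hki
      · have hcne : ¬ c = i := by simp [hc, Fin.ext_iff]; omega
        rw [if_neg hcne, if_pos (by omega : k + 1 ≤ i.val), if_pos (by omega : k ≤ i.val)]
        rw [Finset.prod_eq_prod_Ico_succ_bot (by omega : k < i.val + 1)]
        rw [hH]; ring
      · have hceq : c = i := by simp [hc, Fin.ext_iff]; omega
        rw [if_pos hceq, if_neg (by omega : ¬ k + 1 ≤ i.val), if_pos (by omega : k ≤ i.val)]
        rw [show Finset.Ico k (i.val + 1) = {k} by rw [← hki]; exact Nat.Ico_succ_singleton k]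
        rw [Finset.prod_singleton, hH, hceq]
        ring
      · have hcne : ¬ c = i := by simp [hc, Fin.ext_iff]; omega
        rw [if_neg hcne, if_neg (by omega : ¬ k + 1 ≤ i.val), if_neg (by omega : ¬ k ≤ i.val)]
        ring
    · have hfun : (fun y : Fin N → ℝ => Hrec N α y k) = fun _ => 0 :=
        funext fun y => Hrec_of_ge y h
      have hi : ¬ k ≤ i.val := by have := i.isLt; omega
      rw [hfun, fderiv_const_apply, if_neg hi]; simp

lemma fderiv_Hrec (k : ℕ) (y : Fin N → ℝ) (i : Fin N) :
    fderiv ℝ (fun y => Hrec N α y k) y (Pi.single i 1) =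
      if k ≤ i.val then
        α i * Real.sinh (α i * y i) * ∏ j ∈ Finset.Ico k (i.val + 1), Hrec N α y j
      else 0 :=
  fderiv_Hrec_aux N k (by omega) y i

lemma key_prod (y : Fin N → ℝ) {l : ℕ} {i j : Fin N} (hli : l ≤ i.val) (hlj : l ≤ j.val) :
    (∏ m ∈ (Finset.range (j.val + 1)).erase l, Hrec N α y m) *
      ∏ m ∈ Finset.Ico l (i.val + 1), Hrec N α y m =
    Pprod N α y (j.val + 1) * Pprod N α y (i.val + 1) * (Pprod N α y (l + 1))⁻¹ := by
  have hlN : l < N := lt_of_le_of_lt hli i.isLt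
  have e1 : (∏ m ∈ (Finset.range (j.val + 1)).erase l, Hrec N α y m) * Hrec N α y l =
      Pprod N α y (j.val + 1) :=
    Finset.prod_erase_mul _ _ (Finset.mem_range.mpr (by omega))
  have e2 : Pprod N α y l * ∏ m ∈ Finset.Ico l (i.val + 1), Hrec N α y m =
      Pprod N α y (i.val + 1) :=
    Finset.prod_range_mul_prod_Ico _ (by omega)
  have e3 : Pprod N α y (l + 1) = Pprod N α y l * Hrec N α y l :=
    Finset.prod_range_succ _ _
  have h1 : Hrec N α y l ≠ 0 := (Hrec_pos y hlN).ne'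
  have h2 : Pprod N α y l ≠ 0 := (Pprod_pos y (by omega)).ne'
  rw [← e1, ← e2, e3]
  field_simp

lemma sum_part (y : Fin N → ℝ) (i j : Fin N) :
    (α j * Real.sinh (α j * y j)) * (∑ l ∈ Finset.range (j.val + 1),
      (∏ m ∈ (Finset.range (j.val + 1)).erase l, Hrec N α y m) *
        (if l ≤ i.val then α i * Real.sinh (α i * y i) *
          ∏ m ∈ Finset.Ico l (i.val + 1), Hrec N α y m else 0)) =
    Afun N α y i * Afun N α y j *
      ∑ k ∈ Finset.range (min i.val j.val + 1), (Pprod N α y (k + 1))⁻¹ := by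
  have hsub : Finset.range (min i.val j.val + 1) ⊆ Finset.range (j.val + 1) :=
    Finset.range_subset_range.mpr (by omega)
  rw [← Finset.sum_subset hsub (fun l hl hnl => by
    have : ¬ l ≤ i.val := by
      simp only [Finset.mem_range] at hl hnl; omega
    rw [if_neg this, mul_zero])]
  have step : ∀ l ∈ Finset.range (min i.val j.val + 1),
      (∏ m ∈ (Finset.range (j.val + 1)).erase l, Hrec N α y m) *
        (if l ≤ i.val then α i * Real.sinh (α i * y i) *
          ∏ m ∈ Finset.Ico l (i.val + 1), Hrec N α y m else 0) =
      α i * Real.sinh (α i * y i) *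
        (Pprod N α y (j.val + 1) * Pprod N α y (i.val + 1) * (Pprod N α y (l + 1))⁻¹) := by
    intro l hl
    have hl' : l ≤ min i.val j.val := by simpa [Nat.lt_succ_iff] using hl
    rw [if_pos (by omega : l ≤ i.val), ← key_prod y (by omega : l ≤ i.val) (by omega : l ≤ j.val)]
    ring
  rw [Finset.sum_congr rfl step]
  simp only [Afun, Finset.mul_sum]
  exact Finset.sum_congr rfl fun l _ => by ring

lemma fderiv_h (y : Fin N → ℝ) (i : Fin N) :
    fderiv ℝ (fun y => Hrec N α y 0) y (Pi.single i 1) = Afun N α y i := by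
  rw [fderiv_Hrec 0 y i, if_pos (Nat.zero_le _), Afun, Pprod, Finset.range_eq_Ico]

lemma fderiv2 (y : Fin N → ℝ) (i j : Fin N) :
    fderiv ℝ (fun y' => fderiv ℝ (fun y => Hrec N α y 0) y' (Pi.single j 1)) y (Pi.single i 1) =
      Atfun N α y i * (if i = j then 1 else 0) +
        Afun N α y i * Afun N α y j *
          ∑ k ∈ Finset.range (min i.val j.val + 1), (Pprod N α y (k + 1))⁻¹ := by
  have hfun : (fun y' => fderiv ℝ (fun y => Hrec N α y 0) y' (Pi.single j 1)) =
      fun y' : Fin N → ℝ => (α j * Real.sinh (α j * y' j)) *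
        ∏ l ∈ Finset.range (j.val + 1), Hrec N α y' l := by
    funext y'
    rw [fderiv_h y' j, Afun, Pprod]
  rw [hfun]
  have hL : HasFDerivAt (fun y' : Fin N → ℝ => α j * y' j)
      (α j • (ContinuousLinearMap.proj j : (Fin N → ℝ) →L[ℝ] ℝ)) y :=
    (ContinuousLinearMap.proj j : (Fin N → ℝ) →L[ℝ] ℝ).hasFDerivAt.const_mul (α j)
  have hu : HasFDerivAt (fun y' : Fin N → ℝ => α j * Real.sinh (α j * y' j))
      (α j • (Real.cosh (α j * y j) •
        (α j • (ContinuousLinearMap.proj j : (Fin N → ℝ) →L[ℝ] ℝ)))) y :=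
    by have := ((Real.hasDerivAt_sinh (α j * y j)).comp_hasFDerivAt y hL).const_mul (α j); exact this
  have hv : HasFDerivAt (fun y' : Fin N → ℝ => ∏ l ∈ Finset.range (j.val + 1), Hrec N α y' l)
      (∑ l ∈ Finset.range (j.val + 1),
        (∏ m ∈ (Finset.range (j.val + 1)).erase l, Hrec N α y m) •
          fderiv ℝ (fun y' => Hrec N α y' l) y) y :=
    HasFDerivAt.finset_prod (fun l _ => (diff_Hrec l y).hasFDerivAt)
  rw [show (fun y' : Fin N → ℝ => α j * Real.sinh (α j * y' j) *
      ∏ l ∈ Finset.range (j.val + 1), Hrec N α y' l) = (fun y' : Fin N → ℝ =>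
      α j * Real.sinh (α j * y' j)) * (fun y' : Fin N → ℝ =>
      ∏ l ∈ Finset.range (j.val + 1), Hrec N α y' l) from rfl, (hu.mul hv).fderiv]
  simp only [ContinuousLinearMap.add_apply, ContinuousLinearMap.smul_apply, smul_eq_mul,
    ContinuousLinearMap.sum_apply, ContinuousLinearMap.proj_apply, Pi.single_apply,
    fderiv_Hrec]
  have hsum := sum_part (α := α) y i j
  have hdelta : (∏ l ∈ Finset.range (j.val + 1), Hrec N α y l) *
      (α j * (Real.cosh (α j * y j) * (α j * (if j = i then 1 else 0)))) =
      Atfun N α y i * (if i = j then 1 else 0) := by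
    by_cases h : i = j
    · subst h
      rw [if_pos rfl, Atfun, Pprod]
      ring
    · rw [if_neg (fun hh => h hh.symm), if_neg h]
      ring
  calc (α j * Real.sinh (α j * y j)) * (∑ l ∈ Finset.range (j.val + 1),
        (∏ m ∈ (Finset.range (j.val + 1)).erase l, Hrec N α y m) *
          (if l ≤ i.val then α i * Real.sinh (α i * y i) *
            ∏ m ∈ Finset.Ico l (i.val + 1), Hrec N α y m else 0)) +
      (∏ l ∈ Finset.range (j.val + 1), Hrec N α y l) *
        (α j * (Real.cosh (α j * y j) * (α j * (if j = i then 1 else 0))))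
      = Atfun N α y i * (if i = j then 1 else 0) +
        Afun N α y i * Afun N α y j *
          ∑ k ∈ Finset.range (min i.val j.val + 1), (Pprod N α y (k + 1))⁻¹ := by
        rw [hsum, hdelta, add_comm]

lemma range_min_sum (c : ℕ → ℝ) (i j : Fin N) :
    ∑ k ∈ Finset.range (min i.val j.val + 1), c k =
      ∑ k : Fin N, if k ≤ i ∧ k ≤ j then c k.val else 0 := by
  have key : (∑ k : Fin N, if k ≤ i ∧ k ≤ j then c k.val else 0) =
      ∑ m ∈ Finset.range N, (if m ≤ i.val ∧ m ≤ j.val then c m else 0) := by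
    rw [← Fin.sum_univ_eq_sum_range (fun m => if m ≤ i.val ∧ m ≤ j.val then c m else 0) N]
    refine Finset.sum_congr rfl fun k _ => ?_
    by_cases h : k ≤ i ∧ k ≤ j
    · rw [if_pos h, if_pos ⟨h.1, h.2⟩]
    · rw [if_neg h, if_neg (fun hh => h ⟨hh.1, hh.2⟩)]
  rw [key]
  rw [← Finset.sum_subset (Finset.range_subset_range.mpr (by have := i.isLt; omega :
      min i.val j.val + 1 ≤ N)) (fun l hl hnl => by
    simp only [Finset.mem_range] at hl hnl
    exact if_neg (by omega))]
  exact Finset.sum_congr rfl fun l hl => by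
    simp only [Finset.mem_range] at hl
    rw [if_pos (by omega)]

lemma quadform {d : ℕ} (c At A : Fin N → ℝ) (ζ : Fin N → EuclideanSpace ℝ (Fin d)) :
    (∑ i, ∑ j, (At i * (if i = j then 1 else 0) +
        A i * A j * ∑ k : Fin N, if k ≤ i ∧ k ≤ j then c k else 0) * ⟪ζ i, ζ j⟫) =
      (∑ i, At i * ‖ζ i‖^2) +
        ∑ k, c k * ‖∑ j ∈ Finset.univ.filter (fun j => k ≤ j), A j • ζ j‖^2 := by
  set F : Fin N → Fin N → Fin N → ℝ :=
    fun k i j => if k ≤ i then (if k ≤ j then A i * (A j * ⟪ζ i, ζ j⟫) else 0) else 0 with hF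
  have expand : ∀ k : Fin N,
      ‖∑ j ∈ Finset.univ.filter (fun j => k ≤ j), A j • ζ j‖^2 = ∑ i, ∑ j, F k i j := by
    intro k
    rw [← real_inner_self_eq_norm_sq, sum_inner]
    simp only [inner_sum, real_inner_smul_left, real_inner_smul_right]
    simp only [Finset.sum_filter, hF]
    refine Finset.sum_congr rfl fun a _ => ?_
    split_ifs with h
    · refine Finset.sum_congr rfl fun b _ => ?_
      split_ifs with h2
      · ring
      · rfl
    · simp
  simp only [expand]
  have delta : (∑ i, ∑ j, (At i * (if i = j then 1 else 0)) * ⟪ζ i, ζ j⟫) =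
      ∑ i, At i * ‖ζ i‖^2 := by
    refine Finset.sum_congr rfl fun i _ => ?_
    rw [Finset.sum_eq_single i]
    · rw [if_pos rfl, mul_one, real_inner_self_eq_norm_sq]
    · intro b _ hb; rw [if_neg (fun h => hb h.symm), mul_zero, zero_mul]
    · intro h; exact absurd (Finset.mem_univ i) h
  simp only [add_mul, Finset.sum_add_distrib, delta]
  congr 1
  have lhs1 : (∑ i, ∑ j, (A i * A j * ∑ k : Fin N, if k ≤ i ∧ k ≤ j then c k else 0)
        * ⟪ζ i, ζ j⟫) = ∑ i, ∑ j, ∑ k, c k * F k i j := by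
    refine Finset.sum_congr rfl fun i _ => Finset.sum_congr rfl fun j _ => ?_
    rw [show (A i * A j * ∑ k : Fin N, if k ≤ i ∧ k ≤ j then c k else 0) * ⟪ζ i, ζ j⟫ =
      (∑ k : Fin N, if k ≤ i ∧ k ≤ j then c k else 0) * (A i * (A j * ⟪ζ i, ζ j⟫)) from by ring,
      Finset.sum_mul]
    refine Finset.sum_congr rfl fun k _ => ?_
    simp only [hF]
    split_ifs with h1 h2 h3 <;> first | tauto | ring | simp
  have rhs1 : (∑ k : Fin N, c k * ∑ i, ∑ j, F k i j) = ∑ i, ∑ j, ∑ k, c k * F k i j := by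
    simp only [Finset.mul_sum]
    exact Finset.sum_comm.trans (Finset.sum_congr rfl fun i _ => Finset.sum_comm)
  rw [lhs1]
  exact rhs1.symm

end auxLemmas

/-- **Derivatives of the iterated-exponential Lyapunov function.** `h` is smooth,
`∂h/∂y_i = A_i`, `∂²h/∂y_i∂y_j = Ã_i 1_{i=j} + A_i A_j Σ_{k ≤ min(i,j)} P_{k+1}⁻¹`, and
its Hessian quadratic form on vectors `ζ¹,…,ζ^N ∈ ℝ^d` equals
`Σ_i Ã_i |ζ^i|² + Σ_i P_{i+1}⁻¹ |Σ_{j ≥ i} A_j ζ^j|²`. -/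
theorem stmt16 (N : ℕ) (hN : 1 ≤ N) (α : Fin N → ℝ) (hα : ∀ i, 0 < α i) :
    let h : (Fin N → ℝ) → ℝ := fun y => Hrec N α y 0
    (∀ n : ℕ, ContDiff ℝ n h) ∧
    (∀ (y : Fin N → ℝ) (i : Fin N),
      fderiv ℝ h y (Pi.single i 1) = Afun N α y i) ∧
    (∀ (y : Fin N → ℝ) (i j : Fin N),
      fderiv ℝ (fun y' => fderiv ℝ h y' (Pi.single j 1)) y (Pi.single i 1) =
        Atfun N α y i * (if i = j then 1 else 0) +
          Afun N α y i * Afun N α y j *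
            ∑ k ∈ Finset.range (min i.val j.val + 1), (Pprod N α y (k + 1))⁻¹) ∧
    (∀ d : ℕ, 1 ≤ d →
      ∀ (y : Fin N → ℝ) (ζ : Fin N → EuclideanSpace ℝ (Fin d)),
        (∑ i, ∑ j,
          (fderiv ℝ (fun y' => fderiv ℝ h y' (Pi.single j 1)) y (Pi.single i 1)) *
            ⟪ζ i, ζ j⟫) =
          (∑ i, Atfun N α y i * ‖ζ i‖^2) +
            ∑ i, (Pprod N α y (i.val + 1))⁻¹ *
              ‖∑ j ∈ Finset.univ.filter (fun j => i ≤ j), Afun N α y j • ζ j‖^2) := by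
  intro h
  refine ⟨fun n => (contDiff_Hrec 0).of_le (mod_cast le_top), fun y i => fderiv_h y i,
    fun y i j => fderiv2 y i j, fun d _ y ζ => ?_⟩
  have hrw : ∀ i j : Fin N,
      fderiv ℝ (fun y' => fderiv ℝ h y' (Pi.single j 1)) y (Pi.single i 1) =
      Atfun N α y i * (if i = j then 1 else 0) +
        Afun N α y i * Afun N α y j *
          ∑ k : Fin N, if k ≤ i ∧ k ≤ j then (Pprod N α y (k.val + 1))⁻¹ else 0 := by
    intro i j
    rw [show (fderiv ℝ (fun y' => fderiv ℝ h y' (Pi.single j 1)) y (Pi.single i 1)) =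
      fderiv ℝ (fun y' => fderiv ℝ (fun y => Hrec N α y 0) y' (Pi.single j 1)) y
        (Pi.single i 1) from rfl,
      fderiv2 y i j, range_min_sum (fun k => (Pprod N α y (k + 1))⁻¹) i j]
  simp only [hrw]
  exact quadform (fun k : Fin N => (Pprod N α y (k.val + 1))⁻¹) (Atfun N α y) (Afun N α y) ζ
end
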